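/- If a spin (j+1/2) Killing spinor with Killing number μ exists on an n-dimensional manifold of constant sectional curvature c (n ≥ 3, j ≥ 0), then the three algebraic constraints μ²(1 - (n+2j)(n-2)/(n+2j-2)) + (j + n(n-1)/4)c = 0, μ²(1 - (n+2j-2)(n-2)/(n+2j)) + (-(n+j-1) + n(n-1)/4)c = 0 imply c = 4μ²(n-2)/((n+2j-2)(n+2j)) and 4μ² j(n-3)(j+n-1) = 0; hence at least one of: c = 0 and μ = 0, or n = 3, or j = 0. -/

import Mathlib

/-!
Clearing denominators, the combination `(n+2j)·h₁ - (n+2j-2)·h₂` of the two constraints factors as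
`(n+2j-1)·(c(n+2j-2)(n+2j) - 4(n-2)μ²)`, which pins down `c`. Substituting this value of `c` into
the first constraint leaves `μ²j(n-3)(j+n-1) = 0`, and for `n ≥ 3` the last factor cannot vanish.
-/

def KillingSpinorConstraints (n j μsq c : ℝ) : Prop :=
  μsq * (1 - ((n + 2 * j) * (n - 2)) / (n + 2 * j - 2)) + (j + n * (n - 1) / 4) * c = 0 ∧
    μsq * (1 - ((n + 2 * j - 2) * (n - 2)) / (n + 2 * j))
      + (-(n + j - 1) + n * (n - 1) / 4) * c = 0

namespace KillingSpinorConstraints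

variable {n j μsq c : ℝ}

theorem curvature_mul_eq (h : KillingSpinorConstraints n j μsq c) (hN : 2 < n + 2 * j) :
    c * ((n + 2 * j - 2) * (n + 2 * j)) = 4 * (n - 2) * μsq := by
  obtain ⟨h1, h2⟩ := h
  have hA : n + 2 * j - 2 ≠ 0 := by linarith
  have hB : n + 2 * j ≠ 0 := by linarith
  field_simp at h1 h2
  have hfactor : (n + 2 * j - 1) * (c * ((n + 2 * j - 2) * (n + 2 * j)) - 4 * (n - 2) * μsq) = 0 := by
    linear_combination (1 / 4 : ℝ) * ((n + 2 * j) * h1 - (n + 2 * j - 2) * h2)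
  have hS : n + 2 * j - 1 ≠ 0 := by linarith
  exact sub_eq_zero.mp ((mul_eq_zero.mp hfactor).resolve_left hS)

theorem curvature_eq (h : KillingSpinorConstraints n j μsq c) (hN : 2 < n + 2 * j) :
    c = 4 * μsq * (n - 2) / ((n + 2 * j - 2) * (n + 2 * j)) := by
  have hAB : (n + 2 * j - 2) * (n + 2 * j) ≠ 0 := mul_ne_zero (by linarith) (by linarith)
  rw [eq_div_iff hAB, h.curvature_mul_eq hN]
  ring

theorem obstruction_eq_zero (h : KillingSpinorConstraints n j μsq c) (hN : 2 < n + 2 * j) :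
    4 * μsq * j * (n - 3) * (j + n - 1) = 0 := by
  have hc := h.curvature_mul_eq hN
  obtain ⟨h1, -⟩ := h
  have hA : n + 2 * j - 2 ≠ 0 := by linarith
  field_simp at h1
  linear_combination -((n + 2 * j) / 4) * h1 + (j + n * (n - 1) / 4) * hc

end KillingSpinorConstraints

theorem eq_zero_or_eq_three_or_eq_zero_of_obstruction {n j : ℕ} {μsq : ℝ} (hn : 3 ≤ n)
    (h : 4 * μsq * (j : ℝ) * ((n : ℝ) - 3) * ((j : ℝ) + (n : ℝ) - 1) = 0) :
    μsq = 0 ∨ n = 3 ∨ j = 0 := by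
  have hpos : (0 : ℝ) < (j : ℝ) + (n : ℝ) - 1 := by
    have : (3 : ℝ) ≤ n := by exact_mod_cast hn
    linarith [(j.cast_nonneg : (0 : ℝ) ≤ j)]
  rcases mul_eq_zero.mp h with h | h
  · simp only [mul_eq_zero, sub_eq_zero, Nat.cast_eq_zero, OfNat.ofNat_ne_zero, false_or] at h
    rcases h with (hμ | hj) | hn3
    · exact Or.inl hμ
    · exact Or.inr (Or.inr hj)
    · exact Or.inr (Or.inl (by exact_mod_cast hn3))
  · exact absurd h hpos.ne'

theorem killing_spinor_constant_curvature_constraints (n j : ℕ) (hn : 3 ≤ n)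
    (μsq c : ℝ)
    (h1 : μsq * (1 - (((n : ℝ) + 2 * j) * ((n : ℝ) - 2)) / ((n : ℝ) + 2 * j - 2))
        + ((j : ℝ) + (n : ℝ) * ((n : ℝ) - 1) / 4) * c = 0)
    (h2 : μsq * (1 - (((n : ℝ) + 2 * j - 2) * ((n : ℝ) - 2)) / ((n : ℝ) + 2 * j))
        + (-((n : ℝ) + (j : ℝ) - 1) + (n : ℝ) * ((n : ℝ) - 1) / 4) * c = 0) :
    c = 4 * μsq * ((n : ℝ) - 2) / (((n : ℝ) + 2 * j - 2) * ((n : ℝ) + 2 * j)) ∧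
    4 * μsq * (j : ℝ) * ((n : ℝ) - 3) * ((j : ℝ) + (n : ℝ) - 1) = 0 ∧
    ((c = 0 ∧ μsq = 0) ∨ n = 3 ∨ j = 0) := by
  have h : KillingSpinorConstraints n j μsq c := ⟨h1, h2⟩
  have hN : (2 : ℝ) < n + 2 * j := by
    have : (3 : ℝ) ≤ n := by exact_mod_cast hn
    linarith [(j.cast_nonneg : (0 : ℝ) ≤ j)]
  have hc := h.curvature_eq hN
  have hobs := h.obstruction_eq_zero hN
  refine ⟨hc, hobs, ?_⟩
  rcases eq_zero_or_eq_three_or_eq_zero_of_obstruction hn hobs with hμ | hn3 | hj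
  · exact Or.inl ⟨by rw [hc, hμ]; ring, hμ⟩
  · exact Or.inr (Or.inl hn3)
  · exact Or.inr (Or.inr hj)
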